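/- Let F(x) = ∏_{i=1}^k χ_{[0,∞)}(x_i)·x_i^{d_i−1} on ℝⁿ with each d_i ≥ 2, and let |d| = d_1 + ⋯ + d_k + (n−k). Then F is locally Lipschitz with the quantitative bound: there exists C > 0 such that for all x, z ∈ ℝⁿ with |x − z| ≤ 1, |F(x) − F(z)| ≤ C·(1 + |x|^{|d|−n−1})·|x − z|. -/

import Mathlib

/-!
With `S = |d| - n = ∑_{i<k} (d_i - 1)`, the weight is a product of `S` factors `max(x_i, 0)`,
each `1`-Lipschitz in `x`. When `|x - z| ≤ 1` all factors at `x` and at `z` are bounded by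
`1 + |x|`, so telescoping the product gives `|F x - F z| ≤ S (1 + |x|)^(S-1) |x - z|`, and
`(1 + |x|)^(S-1) ≤ 2^(S-2) (1 + |x|^(S-1))`.
-/

open Finset

lemma natCast_mul_pow_sub_one_mul_pow {R : Type*} [CommSemiring R] (n p : ℕ) (M : R) :
    (n : R) * M ^ (n - 1) * M ^ p = n * M ^ (n + p - 1) := by
  rcases n with _ | n
  · simp
  · rw [mul_assoc, ← pow_add, Nat.add_sub_cancel, Nat.add_right_comm, Nat.add_sub_cancel]

section ProdPow

variable {ι R : Type*} [CommRing R] [LinearOrder R] [IsStrictOrderedRing R]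

lemma abs_prod_pow_le (s : Finset ι) (m : ι → ℕ) {a : ι → R} {M : R}
    (ha : ∀ i ∈ s, |a i| ≤ M) : |∏ i ∈ s, a i ^ m i| ≤ M ^ ∑ i ∈ s, m i := by
  rw [abs_prod, ← prod_pow_eq_pow_sum]
  exact prod_le_prod (fun i _ => abs_nonneg _) fun i hi => by
    rw [abs_pow]; exact pow_le_pow_left₀ (abs_nonneg _) (ha i hi) _

lemma abs_prod_pow_sub_prod_pow_le (s : Finset ι) (m : ι → ℕ) {a b : ι → R} {M ε : R}
    (ha : ∀ i ∈ s, |a i| ≤ M) (hb : ∀ i ∈ s, |b i| ≤ M) (hab : ∀ i ∈ s, |a i - b i| ≤ ε) :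
    |∏ i ∈ s, a i ^ m i - ∏ i ∈ s, b i ^ m i| ≤
      ε * (∑ i ∈ s, m i) * M ^ (∑ i ∈ s, m i - 1) := by
  classical
  induction s using Finset.cons_induction with
  | empty => simp
  | cons j t hj ih =>
    simp only [mem_cons, forall_eq_or_imp] at ha hb hab
    have hM : 0 ≤ M := (abs_nonneg _).trans ha.1
    have hε : 0 ≤ ε := (abs_nonneg _).trans hab.1
    set T := ∑ i ∈ t, m i
    have hj_pow : |a j ^ m j - b j ^ m j| ≤ ε * m j * M ^ (m j - 1) :=
      (abs_pow_sub_pow_le ..).trans <| by gcongr; exacts [hab.1, max_le ha.1 hb.1]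
    rw [prod_cons, prod_cons, sum_cons]
    calc |a j ^ m j * ∏ i ∈ t, a i ^ m i - b j ^ m j * ∏ i ∈ t, b i ^ m i|
        = |a j ^ m j * (∏ i ∈ t, a i ^ m i - ∏ i ∈ t, b i ^ m i) +
            (a j ^ m j - b j ^ m j) * ∏ i ∈ t, b i ^ m i| := by congr 1; ring
      _ ≤ M ^ m j * (ε * T * M ^ (T - 1)) + ε * m j * M ^ (m j - 1) * M ^ T := by
        refine (abs_add_le _ _).trans ?_
        rw [abs_mul, abs_mul, abs_pow]
        gcongr
        exacts [ha.1, ih ha.2 hb.2 hab.2, abs_prod_pow_le t m hb.2]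
      _ = ε * (T * M ^ (T - 1) * M ^ m j) + ε * (m j * M ^ (m j - 1) * M ^ T) := by ring
      _ = ε * ↑(m j + T) * M ^ (m j + T - 1) := by
        rw [natCast_mul_pow_sub_one_mul_pow, natCast_mul_pow_sub_one_mul_pow, Nat.add_comm T]
        push_cast; ring

end ProdPow

lemma ite_nonneg_pow_eq_max_pow {R : Type*} [Semiring R] [LinearOrder R] (a : R) {p : ℕ}
    (hp : p ≠ 0) : (if 0 ≤ a then a ^ p else 0) = max a 0 ^ p := by
  split_ifs with ha
  · rw [max_eq_left ha]
  · rw [max_eq_right (le_of_not_ge ha), zero_pow hp]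

lemma abs_max_zero_le_abs {R : Type*} [AddCommGroup R] [LinearOrder R] [IsOrderedAddMonoid R]
    (a : R) : |max a 0| ≤ |a| := by
  rw [abs_of_nonneg (le_max_right _ _)]
  exact max_le (le_abs_self a) (abs_nonneg a)

lemma abs_prod_ite_nonneg_pow_sub_le {ι : Type*} [Fintype ι] (s : Finset ι) (m : ι → ℕ)
    (hm : ∀ i ∈ s, m i ≠ 0) (x z : EuclideanSpace ℝ ι) :
    |(∏ i ∈ s, if 0 ≤ x i then x i ^ m i else 0) - ∏ i ∈ s, if 0 ≤ z i then z i ^ m i else 0|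
      ≤ ‖x - z‖ * (∑ i ∈ s, m i) * max ‖x‖ ‖z‖ ^ (∑ i ∈ s, m i - 1) := by
  have abs_apply_le (y : EuclideanSpace ℝ ι) (i : ι) : |y i| ≤ ‖y‖ := PiLp.norm_apply_le y i
  rw [prod_congr rfl fun i hi => ite_nonneg_pow_eq_max_pow (x i) (hm i hi),
    prod_congr rfl fun i hi => ite_nonneg_pow_eq_max_pow (z i) (hm i hi)]
  refine abs_prod_pow_sub_prod_pow_le s m (fun i _ => ?_) (fun i _ => ?_) fun i _ => ?_
  · exact (abs_max_zero_le_abs _).trans <| (abs_apply_le x i).trans (le_max_left _ _)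
  · exact (abs_max_zero_le_abs _).trans <| (abs_apply_le z i).trans (le_max_right _ _)
  · exact (abs_max_sub_max_le_abs _ _ _).trans (abs_apply_le (x - z) i)

lemma sum_eq_sum_sub_one_add_card {ι : Type*} [Fintype ι] (s : Finset ι) (d : ι → ℕ)
    (hs : ∀ i ∈ s, 1 ≤ d i) (hsc : ∀ i ∉ s, d i = 1) :
    ∑ i, d i = ∑ i ∈ s, (d i - 1) + Fintype.card ι := by
  have hd (i : ι) : d i - 1 + 1 = d i := by
    by_cases hi : i ∈ s
    · exact Nat.sub_add_cancel (hs i hi)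
    · rw [hsc i hi]
  calc ∑ i, d i = ∑ i, (d i - 1 + 1) := by simp only [hd]
    _ = ∑ i, (d i - 1) + Fintype.card ι := by
      rw [sum_add_distrib, sum_const, smul_eq_mul, mul_one, card_univ]
    _ = _ := by rw [sum_subset (subset_univ s) fun i _ hi => by simp [hsc i hi]]

theorem weight_locally_lipschitz_general (n k : ℕ) (d : Fin n → ℕ)
    (hd2 : ∀ i : Fin n, (i : ℕ) < k → 2 ≤ d i)
    (hd1 : ∀ i : Fin n, k ≤ (i : ℕ) → d i = 1) :
    ∃ C > 0, ∀ x z : EuclideanSpace ℝ (Fin n), ‖x - z‖ ≤ 1 →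
      |(∏ i ∈ Finset.univ.filter (fun i : Fin n => (i : ℕ) < k),
          if 0 ≤ x i then x i ^ (d i - 1) else 0) -
        (∏ i ∈ Finset.univ.filter (fun i : Fin n => (i : ℕ) < k),
          if 0 ≤ z i then z i ^ (d i - 1) else 0)|
        ≤ C * (1 + ‖x‖ ^ ((∑ i, d i) - n - 1)) * ‖x - z‖ := by
  set s := Finset.univ.filter (fun i : Fin n => (i : ℕ) < k)
  set S := ∑ i ∈ s, (d i - 1)
  have hds (i : Fin n) (hi : i ∈ s) : 2 ≤ d i := hd2 i (by simpa [s] using hi)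
  have hS : (∑ i, d i) - n - 1 = S - 1 := by
    rw [sum_eq_sum_sub_one_add_card s d (fun i hi => (hds i hi).trans' one_le_two)
      (fun i hi => hd1 i (by simpa [s] using hi)), Fintype.card_fin]
    omega
  refine ⟨S * 2 ^ (S - 2) + 1, by positivity, fun x z hxz => ?_⟩
  have hz : ‖z‖ ≤ 1 + ‖x‖ := by
    linarith [norm_le_norm_add_norm_sub' z x, norm_sub_rev z x]
  calc _ ≤ ‖x - z‖ * S * max ‖x‖ ‖z‖ ^ (S - 1) :=
        abs_prod_ite_nonneg_pow_sub_le s _ (fun i hi => by have := hds i hi; omega) x z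
    _ ≤ ‖x - z‖ * S * (2 ^ (S - 2) * (1 + ‖x‖ ^ (S - 1))) := by
        gcongr
        calc max ‖x‖ ‖z‖ ^ (S - 1) ≤ (1 + ‖x‖) ^ (S - 1) := by
              gcongr; exact max_le (by linarith) hz
          _ ≤ _ := by simpa [Nat.sub_sub] using add_pow_le zero_le_one (norm_nonneg x) (S - 1)
    _ = S * 2 ^ (S - 2) * (1 + ‖x‖ ^ (S - 1)) * ‖x - z‖ := by ring
    _ ≤ _ := by rw [hS]; gcongr; exact le_add_of_nonneg_right zero_le_one

/-- The weight `F(x) = ∏_{i<k} χ_{[0,∞)}(x_i)·x_i^{d_i−1}` on `ℝⁿ` (with `d_i ≥ 2` for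
`i < k` and `d_i = 1` otherwise, `|d| = Σ d_i`) satisfies the quantitative local Lipschitz
bound `|F(x) − F(z)| ≤ C(1 + |x|^{|d|−n−1})|x−z|` whenever `|x−z| ≤ 1`. -/
theorem weight_locally_lipschitz (n k : ℕ) (hk : k ≤ n) (d : Fin n → ℕ)
    (hd2 : ∀ i : Fin n, (i : ℕ) < k → 2 ≤ d i)
    (hd1 : ∀ i : Fin n, k ≤ (i : ℕ) → d i = 1) :
    ∃ C > 0, ∀ x z : EuclideanSpace ℝ (Fin n), ‖x - z‖ ≤ 1 →
      |(∏ i ∈ Finset.univ.filter (fun i : Fin n => (i : ℕ) < k),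
          if 0 ≤ x i then x i ^ (d i - 1) else 0) -
        (∏ i ∈ Finset.univ.filter (fun i : Fin n => (i : ℕ) < k),
          if 0 ≤ z i then z i ^ (d i - 1) else 0)|
        ≤ C * (1 + ‖x‖ ^ ((∑ i, d i) - n - 1)) * ‖x - z‖ :=
  weight_locally_lipschitz_general n k d hd2 hd1
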